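/- Let n ≥ 2 and r ≥ 1 be integers. Let x₁, x₂, …, x_k be distinct points of S_r arranged in counterclockwise order (i.e., admitting lifts t₁ < t₂ < ⋯ < t_k < t₁ + r in ℝ), and let I₁, I₂, …, I_k be pairwise disjoint closed arcs with nonempty interiors in S_r, also arranged in counterclockwise order. Then there is an element f ∈ BT_{n,r} with f(xᵢ) ∈ Iᵢ for all 1 ≤ i ≤ k. -/

import Mathlib

noncomputable section

/-- `ℤ[1/n]` realized as a subset of `ℝ`: all reals of the form `a * n^b` with `a b : ℤ`. -/
def zpows (n : ℕ) : Set ℝ := {x : ℝ | ∃ a b : ℤ, x = (a : ℝ) * (n : ℝ) ^ b}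

/-- The defining properties of the (unique) ring homomorphism `φₙ : ℤ[1/n] → ℤ/(n-1)ℤ`,
expressed for a function `φ : ℝ → ZMod (n-1)` restricted to the subset `zpows n`. -/
def IsPhi (n : ℕ) (φ : ℝ → ZMod (n - 1)) : Prop :=
  (∀ x ∈ zpows n, ∀ y ∈ zpows n, φ (x + y) = φ x + φ y) ∧
  (∀ x ∈ zpows n, ∀ y ∈ zpows n, φ (x * y) = φ x * φ y) ∧
  φ 1 = 1

/-- Piecewise linearity data on the circle `ℝ/rℤ`, expressed for an `r`-periodic lift
`F : ℝ → ℝ`: there is an `r`-periodic break set `B ⊆ ℤ[1/n]`, finite in each period,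
off which `F` is locally affine with slopes integral powers of `n`. -/
def CircPL (n : ℕ) (r : ℝ) (F : ℝ → ℝ) : Prop :=
  ∃ B : Set ℝ,
    (B ∩ Set.Ico (0 : ℝ) r).Finite ∧ (∀ x ∈ B, x + r ∈ B ∧ x - r ∈ B) ∧ B ⊆ zpows n ∧
    ∀ x ∉ B, ∃ (k : ℤ) (c : ℝ), ∃ ε > 0, ∀ y : ℝ, |y - x| < ε → F y = (n : ℝ) ^ k * y + c

/-- Membership in `T_{n,r}`: an orientation-preserving homeomorphism of the circle
`S_r = ℝ/rℤ` (encoded by a strictly monotone surjective lift commuting with `x ↦ x + r`),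
piecewise linear with finitely many breaks, all breaks in `ℤ[1/n]`, all slopes integral
powers of `n`, and mapping (the image of) `ℤ[1/n]` into itself. -/
def MemT (n : ℕ) (r : ℝ) (f : AddCircle r → AddCircle r) : Prop :=
  ∃ F : ℝ → ℝ,
    (∀ x : ℝ, f (x : AddCircle r) = ((F x : ℝ) : AddCircle r)) ∧
    (∀ x : ℝ, F (x + r) = F x + r) ∧
    StrictMono F ∧ Function.Surjective F ∧ CircPL n r F ∧
    (∀ q ∈ zpows n, F q ∈ zpows n)

/-- The generating set of `BT_{n,r}`: elements of `T_{n,r}` that restrict to the identity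
on some nonempty open arc of `S_r`. -/
def BTgen (n : ℕ) (r : ℝ) : Set (Equiv.Perm (AddCircle r)) :=
  {f : Equiv.Perm (AddCircle r) | MemT n r ⇑f ∧
    ∃ u v : ℝ, u < v ∧ ∀ w ∈ Set.Ioo u v, f ((w : ℝ) : AddCircle r) = ((w : ℝ) : AddCircle r)}

/-- `BT_{n,r}`, the subgroup of `T_{n,r}` generated by the elements that are the identity
on some nonempty open arc. -/
def BTgrp (n : ℕ) (r : ℝ) : Subgroup (Equiv.Perm (AddCircle r)) :=
  Subgroup.closure (BTgen n r)

/-!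
Periodizing the piecewise linear map `bump u a v N`, which is the identity outside `[u, v]`,
has slopes `N` and `N⁻¹` near the ends and translates the middle by `(N - 1) * a`, gives an
element of `BT_{n,r}` fixing the arc `(v, u + r)`. Taking `N = n ^ e` large and `a` small, such a
generator pushes a single point forward into any short arc ahead of it without moving the points
outside a prescribed arc; pushing the points one at a time (the later ones first) moves any
increasing family of points forward into ordered target arcs, as long as everything stays within
one period. The points `xᵢ` and the arcs `Iᵢ` need not fit into one period in this way, so three
such moves are used: squeeze the `xᵢ` into a short arc just after `t_k`, transport this cluster
to a point of the gap between `I_k` and `I₁`, and from there spread it over the arcs `Iᵢ`.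
-/

open Set Filter Topology Function

section Zpows

variable {n : ℕ}

lemma zpow_mem_zpows (b : ℤ) : (n : ℝ) ^ b ∈ zpows n := ⟨1, b, by simp⟩

def zpowsSubring (hn : n ≠ 0) : Subring ℝ where
  carrier := zpows n
  zero_mem' := ⟨0, 0, by simp⟩
  one_mem' := ⟨1, 0, by simp⟩
  neg_mem' := by
    rintro _ ⟨a, b, rfl⟩
    exact ⟨-a, b, by push_cast; ring⟩
  mul_mem' := by
    rintro _ _ ⟨a, b, rfl⟩ ⟨a', b', rfl⟩
    exact ⟨a * a', b + b', by rw [zpow_add₀ (by exact_mod_cast hn)]; push_cast; ring⟩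
  add_mem' := by
    rintro _ _ ⟨a, b, rfl⟩ ⟨a', b', rfl⟩
    refine ⟨a * n ^ (b - min b b').toNat + a' * n ^ (b' - min b b').toNat, min b b', ?_⟩
    have hn' : (n : ℝ) ≠ 0 := by exact_mod_cast hn
    have key : ∀ c : ℤ, min b b' ≤ c →
        (n : ℝ) ^ c = (n : ℝ) ^ (c - min b b').toNat * (n : ℝ) ^ min b b' := fun c hc => by
      rw [← zpow_natCast, ← zpow_add₀ hn', Int.toNat_of_nonneg (by omega), sub_add_cancel]
    push_cast
    rw [key b (min_le_left _ _), key b' (min_le_right _ _)]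
    ring

lemma exists_zpows_mem_Ioo (hn : 1 < n) {p q : ℝ} (h : p < q) : ∃ x ∈ zpows n, x ∈ Ioo p q := by
  obtain ⟨e, he⟩ := pow_unbounded_of_one_lt (q - p)⁻¹ (by exact_mod_cast hn : (1 : ℝ) < n)
  have hN : (0 : ℝ) < (n : ℝ) ^ e := by positivity
  have hstep : 1 / (n : ℝ) ^ e < q - p := by
    rw [div_lt_iff₀ hN]; rwa [inv_lt_iff_one_lt_mul₀ (sub_pos.2 h), mul_comm] at he
  refine ⟨(⌊p * n ^ e⌋ + 1 : ℤ) * (n : ℝ) ^ (-(e : ℤ)), ⟨_, _, rfl⟩, ?_, ?_⟩ <;>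
    rw [zpow_neg, zpow_natCast, ← div_eq_mul_inv]
  · rw [lt_div_iff₀ hN]; push_cast; exact Int.lt_floor_add_one _
  · have := Int.floor_le (p * (n : ℝ) ^ e)
    rw [div_lt_iff₀ hN]; push_cast
    rw [div_lt_iff₀ hN] at hstep
    nlinarith

end Zpows

def bump (u a v N x : ℝ) : ℝ :=
  max x (min (x + (N - 1) * a) (min (u + N * (x - u)) (v - (v - x) / N)))

section Bump

variable {u a v N : ℝ}

lemma bump_strictMono (hN : 0 < N) : StrictMono (bump u a v N) := by
  intro x y hxy
  have h₁ : x + (N - 1) * a < y + (N - 1) * a := by linarith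
  have h₂ : u + N * (x - u) < u + N * (y - u) := by nlinarith
  have h₃ : v - (v - x) / N < v - (v - y) / N := by
    have := div_lt_div_of_pos_right (sub_lt_sub_left hxy v) hN; linarith
  exact max_lt_max hxy (min_lt_min h₁ (min_lt_min h₂ h₃))

lemma continuous_bump : Continuous (bump u a v N) := by
  unfold bump; fun_prop

lemma self_le_bump (x : ℝ) : x ≤ bump u a v N x := le_max_left _ _

lemma bump_of_le (hN : 1 ≤ N) {x : ℝ} (hx : x ≤ u) : bump u a v N x = x :=
  max_eq_left <| (min_le_right _ _).trans <| (min_le_left _ _).trans (by nlinarith)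

lemma bump_of_ge (hN : 1 ≤ N) {x : ℝ} (hx : v ≤ x) : bump u a v N x = x := by
  have : v - x ≤ (v - x) / N := by rw [le_div_iff₀ (by linarith)]; nlinarith
  exact max_eq_left <| (min_le_right _ _).trans <| (min_le_right _ _).trans (by linarith)

lemma bump_of_mem_Icc_left (hN : 1 ≤ N) (hs : u + a ≤ v - N * a) {x : ℝ}
    (hx : x ∈ Icc u (u + a)) : bump u a v N x = u + N * (x - u) := by
  obtain ⟨h₁, h₂⟩ := hx
  have h₃ : (N + 1) * (x - u) ≤ v - u := by nlinarith
  have h₄ : u + N * (x - u) ≤ v - (v - x) / N := by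
    rw [le_sub_comm, div_le_iff₀ (by linarith)]
    nlinarith [mul_nonneg (sub_nonneg.2 hN) (sub_nonneg.2 h₃)]
  rw [bump, min_eq_left h₄, min_eq_right (by nlinarith), max_eq_right (by nlinarith)]

lemma bump_of_mem_Icc_mid (hN : 1 ≤ N) (ha : 0 ≤ a) {x : ℝ}
    (hx : x ∈ Icc (u + a) (v - N * a)) : bump u a v N x = x + (N - 1) * a := by
  obtain ⟨h₁, h₂⟩ := hx
  have h₃ : x + (N - 1) * a ≤ v - (v - x) / N := by
    rw [le_sub_comm, div_le_iff₀ (by linarith)]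
    nlinarith [mul_nonneg (sub_nonneg.2 hN) (sub_nonneg.2 h₂)]
  rw [bump, min_eq_left (le_min (by nlinarith) h₃), max_eq_right (by nlinarith)]

lemma bump_of_mem_Icc_right (hN : 1 ≤ N) (hs : u + a ≤ v - N * a) {x : ℝ}
    (hx : x ∈ Icc (v - N * a) v) : bump u a v N x = v - (v - x) / N := by
  obtain ⟨h₁, h₂⟩ := hx
  have hN0 : 0 < N := by linarith
  have h₃ : (N + 1) * (v - x) ≤ N * (v - u) := by nlinarith
  have h₄ : v - (v - x) / N ≤ u + N * (x - u) := by
    rw [sub_le_comm, le_div_iff₀ hN0]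
    nlinarith [mul_nonneg (sub_nonneg.2 hN) (sub_nonneg.2 h₃)]
  have h₅ : v - (v - x) / N ≤ x + (N - 1) * a := by
    rw [sub_le_comm, le_div_iff₀ hN0]; nlinarith
  have h₆ : x ≤ v - (v - x) / N := by
    rw [le_sub_comm, div_le_iff₀ hN0]; nlinarith
  rw [bump, min_eq_right h₄, min_eq_right h₅, max_eq_right h₆]

lemma bump_eventually_affine (hN : 1 ≤ N) (ha : 0 ≤ a) (hs : u + a ≤ v - N * a) {x : ℝ}
    (hx : x ∉ ({u, u + a, v - N * a, v} : Set ℝ)) :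
    ∃ s ∈ ({1, N, N⁻¹} : Set ℝ), ∃ c : ℝ, ∀ᶠ y in 𝓝 x, bump u a v N y = s * y + c := by
  simp only [mem_insert_iff, mem_singleton_iff, not_or] at hx
  obtain ⟨h₁, h₂, h₃, h₄⟩ := hx
  rcases Ne.lt_or_gt h₁ with hxu | hux
  · exact ⟨1, by simp, 0, (eventually_lt_nhds hxu).mono fun y hy => by
      rw [bump_of_le hN hy.le]; ring⟩
  rcases Ne.lt_or_gt h₂ with hxa | hax
  · exact ⟨N, by simp, u - N * u, Filter.eventually_of_mem (Ioo_mem_nhds hux hxa) fun y hy => by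
      rw [bump_of_mem_Icc_left hN hs (Ioo_subset_Icc_self hy)]; ring⟩
  rcases Ne.lt_or_gt h₃ with hxb | hbx
  · exact ⟨1, by simp, (N - 1) * a, Filter.eventually_of_mem (Ioo_mem_nhds hax hxb) fun y hy => by
      rw [bump_of_mem_Icc_mid hN ha (Ioo_subset_Icc_self hy)]; ring⟩
  rcases Ne.lt_or_gt h₄ with hxv | hvx
  · exact ⟨N⁻¹, by simp, v - v / N, Filter.eventually_of_mem (Ioo_mem_nhds hbx hxv) fun y hy => by
      rw [bump_of_mem_Icc_right hN hs (Ioo_subset_Icc_self hy)]; ring⟩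
  · exact ⟨1, by simp, 0, (eventually_gt_nhds hvx).mono fun y hy => by
      rw [bump_of_ge hN hy.le]; ring⟩

lemma bump_mem_subring (S : Subring ℝ) (hN : 1 ≤ N) (ha₀ : 0 ≤ a) (hs : u + a ≤ v - N * a)
    (hu : u ∈ S) (ha : a ∈ S) (hv : v ∈ S) (hNS : N ∈ S) (hNS' : N⁻¹ ∈ S) {x : ℝ} (hx : x ∈ S) :
    bump u a v N x ∈ S := by
  rcases le_total x u with h₁ | h₁
  · rwa [bump_of_le hN h₁]
  rcases le_total x (u + a) with h₂ | h₂
  · rw [bump_of_mem_Icc_left hN hs ⟨h₁, h₂⟩]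
    exact S.add_mem hu (S.mul_mem hNS (S.sub_mem hx hu))
  rcases le_total x (v - N * a) with h₃ | h₃
  · rw [bump_of_mem_Icc_mid hN ha₀ ⟨h₂, h₃⟩]
    exact S.add_mem hx (S.mul_mem (S.sub_mem hNS S.one_mem) ha)
  rcases le_total x v with h₄ | h₄
  · rw [bump_of_mem_Icc_right hN hs ⟨h₃, h₄⟩, div_eq_mul_inv]
    exact S.sub_mem hv (S.mul_mem (S.sub_mem hv hx) hNS')
  · rwa [bump_of_ge hN h₄]

variable {r : ℝ}

lemma mapsTo_bump (hN : 1 ≤ N) (hvr : v ≤ u + r) :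
    MapsTo (bump u a v N) (Ico u (u + r)) (Ico u (u + r)) := fun x hx =>
  ⟨hx.1.trans (self_le_bump x), by
    simpa [bump_of_ge hN hvr] using
      bump_strictMono (u := u) (a := a) (v := v) (N := N) (by linarith) hx.2⟩

lemma surjOn_bump (hN : 1 ≤ N) (hr : 0 < r) (hvr : v ≤ u + r) :
    SurjOn (bump u a v N) (Ico u (u + r)) (Ico u (u + r)) := by
  intro y hy
  have hu : bump u a v N u = u := bump_of_le hN le_rfl
  have hur : bump u a v N (u + r) = u + r := bump_of_ge hN hvr
  obtain ⟨x, hx, rfl⟩ := intermediate_value_Icc (a := u) (b := u + r) (by linarith)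
    continuous_bump.continuousOn (show y ∈ Icc (bump u a v N u) (bump u a v N (u + r)) by
      rw [hu, hur]; exact Ico_subset_Icc_self hy)
  refine ⟨x, ⟨hx.1, hx.2.lt_of_ne ?_⟩, rfl⟩
  rintro rfl
  exact hy.2.ne hur

end Bump

lemma toIcoDiv_mono {α : Type*} [AddCommGroup α] [LinearOrder α] [IsOrderedAddMonoid α]
    [Archimedean α] {p : α} (hp : 0 < p) (a : α) : Monotone (toIcoDiv hp a) := by
  intro x y hxy
  by_contra! h
  have hmul : (toIcoDiv hp a y + 1) • p ≤ toIcoDiv hp a x • p := zsmul_le_zsmul_left hp.le h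
  rw [add_smul, one_smul] at hmul
  refine hxy.not_gt ?_
  calc y < a + p + toIcoDiv hp a y • p :=
        sub_lt_iff_lt_add.1 (sub_toIcoDiv_zsmul_mem_Ico hp a y).2
    _ = a + (toIcoDiv hp a y • p + p) := by abel
    _ ≤ a + toIcoDiv hp a x • p := by gcongr
    _ ≤ x := le_sub_iff_add_le.1 (sub_toIcoDiv_zsmul_mem_Ico hp a x).1

def IsLocallyAffinePowAt (n : ℕ) (G : ℝ → ℝ) (x : ℝ) : Prop :=
  ∃ (k : ℤ) (c : ℝ), ∀ᶠ y in 𝓝 x, G y = (n : ℝ) ^ k * y + c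

def periodize {r : ℝ} (hr : 0 < r) (u : ℝ) (G : ℝ → ℝ) (x : ℝ) : ℝ :=
  G (toIcoMod hr u x) + toIcoDiv hr u x • r

section Periodize

variable {r u : ℝ} (hr : 0 < r) {G : ℝ → ℝ}

lemma periodize_add_zsmul (x : ℝ) (m : ℤ) :
    periodize hr u G (x + m • r) = periodize hr u G x + m • r := by
  simp only [periodize, toIcoMod_add_zsmul, toIcoDiv_add_zsmul, add_smul]; ring

lemma periodize_add_period (x : ℝ) : periodize hr u G (x + r) = periodize hr u G x + r := by
  simpa using periodize_add_zsmul hr x 1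

lemma periodize_of_mem_Ico {x : ℝ} (hx : x ∈ Ico u (u + r)) : periodize hr u G x = G x := by
  have : toIcoDiv hr u x = 0 := (toIcoDiv_eq_iff hr).2 (by simpa using hx)
  rw [periodize, (toIcoMod_eq_self hr).2 hx, this, zero_smul, add_zero]

lemma strictMono_periodize (hG : StrictMonoOn G (Ico u (u + r)))
    (hmaps : MapsTo G (Ico u (u + r)) (Ico u (u + r))) : StrictMono (periodize hr u G) := by
  intro x y hxy
  have hx := toIcoMod_mem_Ico hr u x
  have hy := toIcoMod_mem_Ico hr u y
  rcases (toIcoDiv_mono hr u hxy.le).lt_or_eq with hdiv | hdiv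
  · have hstep : (toIcoDiv hr u x + 1) • r ≤ toIcoDiv hr u y • r :=
      zsmul_le_zsmul_left hr.le hdiv
    rw [add_smul, one_smul] at hstep
    have hGx := (hmaps hx).2
    have hGy := (hmaps hy).1
    simp only [periodize]
    linarith
  · have hmod : toIcoMod hr u x < toIcoMod hr u y := by
      rw [← self_sub_toIcoDiv_zsmul, ← self_sub_toIcoDiv_zsmul, hdiv]; linarith
    simp only [periodize, hdiv]
    linarith [hG hx hy hmod]

lemma surjective_periodize (hG : SurjOn G (Ico u (u + r)) (Ico u (u + r))) :
    Surjective (periodize hr u G) := by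
  intro y
  obtain ⟨x, hx, hGx⟩ := hG (toIcoMod_mem_Ico hr u y)
  refine ⟨x + toIcoDiv hr u y • r, ?_⟩
  rw [periodize_add_zsmul, periodize_of_mem_Ico hr hx, hGx, toIcoMod_add_toIcoDiv_zsmul]

lemma periodize_mem_subring (S : Subring ℝ) (hrS : r ∈ S)
    (hG : ∀ q ∈ Ico u (u + r), q ∈ S → G q ∈ S) {x : ℝ} (hx : x ∈ S) :
    periodize hr u G x ∈ S := by
  have hm : toIcoMod hr u x ∈ S := by
    rw [← self_sub_toIcoDiv_zsmul]; exact S.sub_mem hx (S.zsmul_mem hrS _)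
  exact S.add_mem (hG _ (toIcoMod_mem_Ico hr u x) hm) (S.zsmul_mem hrS _)

lemma circPL_periodize {n : ℕ} (hn : n ≠ 0) (hrz : r ∈ zpows n) {B₀ : Set ℝ}
    (hB₀ : B₀.Finite) (huB : u ∈ B₀) (hBz : B₀ ⊆ zpows n)
    (hG : ∀ x ∈ Ioo u (u + r), x ∉ B₀ → IsLocallyAffinePowAt n G x) :
    CircPL n r (periodize hr u G) := by
  set S := zpowsSubring hn
  refine ⟨toIcoMod hr u ⁻¹' B₀, ?_, fun x hx => ⟨?_, ?_⟩, fun x hx => ?_, fun x hx => ?_⟩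
  · refine (hB₀.image (toIcoMod hr 0)).subset fun x hx => ⟨_, hx.1, ?_⟩
    rw [toIcoMod_toIcoMod, (toIcoMod_eq_self hr).2 (by simpa using hx.2)]
  · simpa [mem_preimage, toIcoMod_add_right] using hx
  · simpa [mem_preimage, toIcoMod_sub] using hx
  · rw [← toIcoMod_add_toIcoDiv_zsmul hr u x]
    exact S.add_mem (hBz hx) (S.zsmul_mem hrz _)
  · set m := toIcoDiv hr u x
    have hy : x - m • r ∈ Ioo u (u + r) := by
      rw [self_sub_toIcoDiv_zsmul]
      exact ⟨(left_le_toIcoMod hr u x).lt_of_ne fun h => hx (by rw [mem_preimage, ← h]; exact huB),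
        toIcoMod_lt_right hr u x⟩
    obtain ⟨k, c, hkc⟩ := hG _ hy (by rwa [self_sub_toIcoDiv_zsmul])
    have hloc : ∀ᶠ z in 𝓝 x, z - m • r ∈ Ioo u (u + r) :=
      (continuous_sub_right _).continuousAt.preimage_mem_nhds (Ioo_mem_nhds hy.1 hy.2)
    have haff : ∀ᶠ z in 𝓝 x, G (z - m • r) = (n : ℝ) ^ k * (z - m • r) + c :=
      ((continuous_sub_right _).tendsto x).eventually hkc
    obtain ⟨ε, hε, h⟩ := Metric.eventually_nhds_iff.1 (hloc.and haff)
    refine ⟨k, c + m • r - (n : ℝ) ^ k * m • r, ε, hε, fun z hz => ?_⟩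
    obtain ⟨hz₁, hz₂⟩ := h (by rwa [Real.dist_eq])
    have : toIcoDiv hr u z = m := (toIcoDiv_eq_iff hr).2 (Ioo_subset_Ico_self hz₁)
    rw [periodize, ← self_sub_toIcoDiv_zsmul, this, hz₂]
    ring

end Periodize

section LiftPerm

variable {r : ℝ}

lemma periodic_coe_of_add_period {F : ℝ → ℝ} (hF : ∀ x, F (x + r) = F x + r) :
    Periodic (fun x => (F x : AddCircle r)) r := fun x => by
  simp only [hF, AddCircle.coe_add_period]

lemma symm_add_period {e : ℝ ≃ ℝ} (he : ∀ x, e (x + r) = e x + r) (y : ℝ) :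
    e.symm (y + r) = e.symm y + r :=
  e.symm_apply_eq.2 (by rw [he, e.apply_symm_apply])

def liftPerm (e : ℝ ≃ ℝ) (he : ∀ x, e (x + r) = e x + r) : Equiv.Perm (AddCircle r) where
  toFun := (periodic_coe_of_add_period he).lift
  invFun := (periodic_coe_of_add_period (symm_add_period he)).lift
  left_inv θ := by
    induction θ using QuotientAddGroup.induction_on with
    | H x => simp [Periodic.lift_coe]
  right_inv θ := by
    induction θ using QuotientAddGroup.induction_on with
    | H x => simp [Periodic.lift_coe]

lemma liftPerm_coe (e : ℝ ≃ ℝ) (he : ∀ x, e (x + r) = e x + r) (x : ℝ) :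
    liftPerm e he x = (e x : AddCircle r) := rfl

end LiftPerm

section Generator

variable {n : ℕ} {r : ℝ}

lemma exists_BTgen_eq_add_on_Icc (hn : n ≠ 0) (hr : 0 < r) (hrz : r ∈ zpows n) {u a v : ℝ}
    (hu : u ∈ zpows n) (haz : a ∈ zpows n) (hv : v ∈ zpows n) (e : ℕ) (ha : 0 ≤ a)
    (hs : u + a ≤ v - (n : ℝ) ^ e * a) (hvr : v < u + r) :
    ∃ g ∈ BTgen n r,
      (∀ x ∈ Icc (u + a) (v - (n : ℝ) ^ e * a),
        g x = ((x + ((n : ℝ) ^ e - 1) * a : ℝ) : AddCircle r)) ∧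
      ∀ w ∈ Ioo v (u + r), g w = w := by
  set N : ℝ := (n : ℝ) ^ e
  set S := zpowsSubring hn
  have hN : 1 ≤ N := one_le_pow₀ (by exact_mod_cast Nat.one_le_iff_ne_zero.2 hn)
  have hNpow : N = (n : ℝ) ^ (e : ℤ) := (zpow_natCast _ _).symm
  have hNpow' : N⁻¹ = (n : ℝ) ^ (-(e : ℤ)) := by rw [zpow_neg, hNpow]
  have hNa : 0 ≤ N * a := by positivity
  set F := periodize hr u (bump u a v N)
  have hmono : StrictMono F := strictMono_periodize hr
    ((bump_strictMono (u := u) (a := a) (v := v) (by linarith)).strictMonoOn _)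
    (mapsTo_bump hN hvr.le)
  have hsurj : Surjective F := surjective_periodize hr (surjOn_bump hN hr hvr.le)
  set g := liftPerm (.ofBijective F (show Bijective F from ⟨hmono.injective, hsurj⟩))
    (periodize_add_period hr)
  have hg : ∀ x ∈ Ico u (u + r), g x = (bump u a v N x : AddCircle r) := fun x hx =>
    (liftPerm_coe _ _ x).trans (congrArg _ (periodize_of_mem_Ico hr hx))
  have hfix : ∀ w ∈ Ioo v (u + r), g w = w := fun w hw => by
    rw [hg w ⟨by linarith [hw.1], hw.2⟩, bump_of_ge hN hw.1.le]
  have hPL : CircPL n r F := by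
    refine circPL_periodize hr hn hrz (B₀ := {u, u + a, v - N * a, v}) (toFinite _) (by simp)
      ?_ fun x _ hx => ?_
    · simp only [insert_subset_iff, singleton_subset_iff]
      exact ⟨hu, S.add_mem hu haz, S.sub_mem hv (S.mul_mem (zpow_mem_zpows (e : ℤ)) haz), hv⟩
    · obtain ⟨s, hs', c, hc⟩ := bump_eventually_affine hN ha hs hx
      obtain rfl | rfl | rfl : s = 1 ∨ s = N ∨ s = N⁻¹ := by simpa using hs'
      exacts [⟨0, c, by simpa using hc⟩, ⟨e, c, by simpa [hNpow] using hc⟩,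
        ⟨-(e : ℤ), c, by simpa [hNpow'] using hc⟩]
  refine ⟨g, ⟨⟨F, fun x => rfl, periodize_add_period hr, hmono, hsurj, hPL, fun q hq => ?_⟩,
    v, u + r, hvr, hfix⟩, fun x hx => ?_, hfix⟩
  · refine periodize_mem_subring hr S hrz (fun q _ hq => ?_) hq
    exact bump_mem_subring S hN ha hs hu haz hv (zpow_mem_zpows (e : ℤ))
      (by rw [hNpow']; exact zpow_mem_zpows _) hq
  · rw [hg x ⟨hx.1.trans' (by linarith), by linarith [hx.2]⟩, bump_of_mem_Icc_mid hN ha hx]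

end Generator

section Moving

variable {n : ℕ} {r : ℝ}

lemma exists_BTgen_push (hn : 1 < n) (hr : 0 < r) (hrz : r ∈ zpows n) {L x T₁ T₂ : ℝ}
    (hLx : L < x) (hxT : x ≤ T₁) (hT : T₁ < T₂) (hTr : T₂ ≤ L + r) :
    ∃ g ∈ BTgen n r, (∃ s ∈ Ioo T₁ T₂, g x = s) ∧ ∀ w ∈ Icc T₂ (L + r), g w = w := by
  set ρ := min ((x - L) / 2) ((T₂ - T₁) / 2)
  have hρ : 0 < ρ := lt_min (by linarith) (by linarith)
  have hρ₁ : ρ ≤ (x - L) / 2 := min_le_left _ _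
  have hρ₂ : ρ ≤ (T₂ - T₁) / 2 := min_le_right _ _
  obtain ⟨e, he⟩ := pow_unbounded_of_one_lt (r / ρ + 1) (by exact_mod_cast hn : (1 : ℝ) < n)
  set N : ℝ := (n : ℝ) ^ e
  have hN : r < ρ * (N - 1) := by rw [← div_lt_iff₀' hρ]; linarith
  have hN₁ : 0 < N - 1 := by nlinarith
  -- `a` is chosen so that the translation `(N - 1) * a` of the bump takes `x` past `T₁` but not
  -- past the midpoint of `(T₁, T₂)`, leaving room for `v`
  obtain ⟨a, haz, ha₁, ha₂⟩ := exists_zpows_mem_Ioo hn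
    (div_lt_div_of_pos_right (show T₁ - x < (T₁ + T₂) / 2 - x by linarith) hN₁)
  rw [div_lt_iff₀ hN₁] at ha₁
  rw [lt_div_iff₀ hN₁] at ha₂
  have ha : 0 < a := by nlinarith
  have haρ : a < ρ := lt_of_mul_lt_mul_right (by linarith) hN₁.le
  obtain ⟨u, huz, hu₁, hu₂⟩ := exists_zpows_mem_Ioo hn (show L < x - a by linarith)
  obtain ⟨v, hvz, hv₁, hv₂⟩ := exists_zpows_mem_Ioo hn
    (show x + (N - 1) * a + a < T₂ by nlinarith)
  obtain ⟨g, hg, hmove, hfix⟩ := exists_BTgen_eq_add_on_Icc (by omega) hr hrz huz haz hvz e ha.le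
    (by nlinarith) (by linarith)
  refine ⟨g, hg, ⟨_, ⟨by nlinarith, by nlinarith⟩, hmove x ⟨by linarith, by nlinarith⟩⟩,
    fun w hw => hfix w ⟨by linarith [hw.1], by linarith [hw.2]⟩⟩

end Moving

section Forward

variable {n : ℕ} {r : ℝ}

lemma exists_BTgrp_forward (hn : 1 < n) (hr : 0 < r) (hrz : r ∈ zpows n) {m : ℕ} {c C : ℝ}
    {z α β : Fin m → ℝ} (hC : C ≤ c + r) (hz : StrictMono z) (hcz : ∀ i, c < z i)
    (hzβ : ∀ i, z i < β i) (hαβ : ∀ i, α i < β i) (hord : ∀ i j, i < j → β i ≤ α j)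
    (hβC : ∀ i, β i ≤ C) :
    ∃ f ∈ BTgrp n r, (∀ i, ∃ s ∈ Ioo (α i) (β i), f (z i) = s) ∧
      ∀ w ∈ Icc C (c + r), f w = w := by
  induction m generalizing c with
  | zero => exact ⟨1, one_mem _, fun i => i.elim0, fun w _ => rfl⟩
  | succ m ih =>
    obtain ⟨f, hf, hfmove, hffix⟩ := ih (c := z 0) (z := z ∘ Fin.succ) (α := α ∘ Fin.succ)
      (β := β ∘ Fin.succ) (by linarith [hcz 0]) (hz.comp (Fin.strictMono_succ))
      (fun i => hz (Fin.succ_pos i)) (fun i => hzβ _) (fun i => hαβ _)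
      (fun i j hij => hord _ _ (Fin.succ_lt_succ_iff.2 hij)) (fun i => hβC _)
    obtain ⟨g, hg, ⟨s, hs, hgs⟩, hgfix⟩ := exists_BTgen_push hn hr hrz (hcz 0)
      (le_max_right (α 0) (z 0)) (max_lt (hαβ 0) (hzβ 0)) ((hβC 0).trans hC)
    refine ⟨g * f, mul_mem (Subgroup.subset_closure hg) hf, fun i => ?_, fun w hw => ?_⟩
    · cases i using Fin.cases with
      | zero =>
        have hf0 : f (z 0) = z 0 := by
          simpa using hffix (z 0 + r) ⟨by linarith [hcz 0], le_rfl⟩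
        exact ⟨s, ⟨(le_max_left _ _).trans_lt hs.1, hs.2⟩, by rw [Equiv.Perm.mul_apply, hf0, hgs]⟩
      | succ j =>
        obtain ⟨s', hs', hfs'⟩ := hfmove j
        simp only [Function.comp_apply] at hs' hfs'
        refine ⟨s', hs', ?_⟩
        rw [Equiv.Perm.mul_apply, hfs', hgfix s'
          ⟨(hord 0 j.succ (Fin.succ_pos j)).trans hs'.1.le, (hs'.2.trans_le (hβC _)).le.trans hC⟩]
    · rw [Equiv.Perm.mul_apply, hffix w ⟨hw.1, hw.2.trans (by linarith [hcz 0])⟩,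
        hgfix w ⟨(hβC 0).trans hw.1, hw.2⟩]

end Forward

lemma exists_mem_Icc_add_zsmul_mem_Icc {r : ℝ} (hr : 0 < r) (x y : ℝ) {ℓ₁ ℓ₂ : ℝ}
    (h₁ : 0 ≤ ℓ₁) (h₂ : 0 ≤ ℓ₂) (h : r ≤ ℓ₁ + ℓ₂) :
    ∃ E ∈ Icc x (x + ℓ₁), ∃ j : ℤ, E + j • r ∈ Icc y (y + ℓ₂) := by
  set t := toIcoMod hr (x - ℓ₂) y
  have ht := toIcoMod_mem_Ico hr (x - ℓ₂) y
  have hty := toIcoMod_add_toIcoDiv_zsmul hr (x - ℓ₂) y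
  refine ⟨max x t, ⟨le_max_left _ _, max_le (by linarith) (by linarith [ht.2])⟩,
    toIcoDiv hr (x - ℓ₂) y, ?_⟩
  rcases le_total x t with hxt | htx
  · rw [max_eq_right hxt, hty]; exact ⟨le_rfl, by linarith⟩
  · rw [max_eq_left htx]; constructor <;> linarith [ht.1]

section Cluster

variable {n : ℕ} {r : ℝ}

lemma exists_BTgrp_cluster (hn : 1 < n) (hr : 0 < r) (hrz : r ∈ zpows n) {m : ℕ} {c P ε : ℝ}
    {z : Fin m → ℝ} (hz : StrictMono z) (hcz : ∀ i, c < z i) (hzP : ∀ i, z i ≤ P)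
    (hε : 0 < ε) (hPε : P + ε ≤ c + r) :
    ∃ f ∈ BTgrp n r, ∃ y : Fin m → ℝ, StrictMono y ∧ (∀ i, y i ∈ Ioo P (P + ε)) ∧
      ∀ i, f (z i) = y i := by
  set h := ε / (m + 1)
  have hh : 0 < h := by positivity
  have hslot : ∀ i : Fin m, P + ((i : ℕ) + 1) * h ≤ P + ε := fun i => by
    have : ((i : ℕ) + 1 : ℝ) * h ≤ (m + 1) * h := by gcongr; exact_mod_cast i.2.le
    rw [mul_div_cancel₀ _ (by positivity)] at this
    linarith
  obtain ⟨f, hf, hmove, -⟩ := exists_BTgrp_forward hn hr hrz (C := P + ε)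
    (α := fun i => P + (i : ℕ) * h) (β := fun i => P + ((i : ℕ) + 1) * h) hPε hz hcz
    (fun i => by nlinarith [hzP i]) (fun i => by simp [hh]) (fun i j hij => by
      have : ((i : ℕ) + 1 : ℝ) ≤ (j : ℕ) := by exact_mod_cast hij
      nlinarith) hslot
  choose y hy hfy using hmove
  refine ⟨f, hf, y, fun i j hij => ?_, fun i => ⟨?_, (hy i).2.trans_le (hslot i)⟩, hfy⟩
  · have : ((i : ℕ) + 1 : ℝ) ≤ (j : ℕ) := by exact_mod_cast hij
    nlinarith [(hy i).2, (hy j).1]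
  · nlinarith [(hy i).1, (Nat.cast_nonneg (i : ℕ) : (0 : ℝ) ≤ (i : ℕ))]

lemma exists_BTgrp_of_cluster (hn : 1 < n) (hr : 0 < r) (hrz : r ∈ zpows n) {m : ℕ}
    {p ε A B : ℝ} {y α β : Fin m → ℝ} (hy : StrictMono y) (hyp : ∀ i, y i ∈ Ioo p (p + ε))
    (hε : 0 < ε) (hαβ : ∀ i, α i < β i) (hord : ∀ i j, i < j → β i ≤ α j)
    (hA : ∀ i, A ≤ α i) (hB : ∀ i, β i ≤ B) (hAB : A ≤ B) (hgap : 3 * ε ≤ A + r - B) :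
    ∃ f ∈ BTgrp n r, ∀ i, ∃ s ∈ Ioo (α i) (β i), f (y i) = s := by
  -- a point `E` ahead of the cluster whose translate `E + j • r` lies in the gap `[B - r, A - ε]`:
  -- moving the cluster just past `E`, the targets shifted by `-j • r` lie within one period ahead
  obtain ⟨E, hE, j, hj⟩ := exists_mem_Icc_add_zsmul_mem_Icc hr (p + ε) (B - r)
    (ℓ₁ := r - 2 * ε) (ℓ₂ := A - ε - B + r) (by linarith) (by linarith) (by linarith)
  obtain ⟨f₁, hf₁, y', hy', hy'E, hf₁y⟩ := exists_BTgrp_cluster hn hr hrz hy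
    (fun i => (hyp i).1) (fun i => (hyp i).2.le.trans hE.1) hε (by linarith [hE.2])
  obtain ⟨f₂, hf₂, hmove, -⟩ := exists_BTgrp_forward hn hr hrz (c := E) (C := E + r)
    (α := fun i => α i - j • r) (β := fun i => β i - j • r) le_rfl hy' (fun i => (hy'E i).1)
    (fun i => by linarith [(hy'E i).2, hj.2, hA i, hαβ i]) (fun i => by simp [hαβ i])
    (fun i i' h => by simp [hord i i' h]) (fun i => by linarith [hj.1, hB i])
  refine ⟨f₂ * f₁, mul_mem hf₂ hf₁, fun i => ?_⟩
  obtain ⟨s, hs, hf₂s⟩ := hmove i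
  refine ⟨s + j • r, ⟨by linarith [hs.1], by linarith [hs.2]⟩, ?_⟩
  rw [Equiv.Perm.mul_apply, hf₁y, hf₂s]
  simp

end Cluster

/-- Given distinct points `x₁, …, x_k` of `S_r` in counterclockwise order
(with lifts `t₁ < ⋯ < t_k < t₁ + r`) and pairwise disjoint closed arcs `I₁, …, I_k` with
nonempty interiors in counterclockwise order, some `f ∈ BT_{n,r}` takes each `xᵢ` into `Iᵢ`. -/
theorem stmt_5 (n : ℕ) (hn : 2 ≤ n) (r : ℕ) (hr : 1 ≤ r) (k : ℕ) (hk : 0 < k)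
    (t a b : Fin k → ℝ)
    (htmono : StrictMono t) (htr : ∀ i, t i < t ⟨0, hk⟩ + r)
    (hab : ∀ i, a i < b i)
    (hord : ∀ i j : Fin k, i < j → b i < a j)
    (harc : ∀ i, b i < a ⟨0, hk⟩ + r) :
    ∃ f : Equiv.Perm (AddCircle (r : ℝ)), f ∈ BTgrp n (r : ℝ) ∧
      ∀ i, ∃ s ∈ Set.Icc (a i) (b i),
        f ((t i : ℝ) : AddCircle (r : ℝ)) = ((s : ℝ) : AddCircle (r : ℝ)) := by
  have hr' : (0 : ℝ) < r := by exact_mod_cast hr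
  have hrz : (r : ℝ) ∈ zpows n := ⟨r, 0, by simp⟩
  set i₀ : Fin k := ⟨0, hk⟩
  set i₁ : Fin k := ⟨k - 1, by omega⟩
  have hi₀ : ∀ i, i₀ ≤ i := fun i => Nat.zero_le _
  have hi₁ : ∀ i, i ≤ i₁ := fun i => Nat.le_sub_one_of_lt i.2
  have ha : Monotone a := StrictMono.monotone fun i j h => (hab i).trans (hord i j h)
  have hb : Monotone b := StrictMono.monotone fun i j h => (hord i j h).trans (hab j)
  set ε := min ((t i₀ + r - t i₁) / 2) ((a i₀ + r - b i₁) / 3)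
  have hε : 0 < ε := lt_min (by linarith [htr i₁]) (by linarith [harc i₁])
  have hεt : ε ≤ (t i₀ + r - t i₁) / 2 := min_le_left _ _
  have hεa : ε ≤ (a i₀ + r - b i₁) / 3 := min_le_right _ _
  obtain ⟨f₁, hf₁, y, hy, hyP, hf₁t⟩ := exists_BTgrp_cluster hn hr' hrz htmono (c := t i₀ - ε)
    (P := t i₁) (fun i => by linarith [htmono.monotone (hi₀ i)])
    (fun i => htmono.monotone (hi₁ i)) hε (by linarith)
  obtain ⟨f₂, hf₂, hmove⟩ := exists_BTgrp_of_cluster hn hr' hrz hy hyP hε hab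
    (fun i j h => (hord i j h).le) (fun i => ha (hi₀ i)) (fun i => hb (hi₁ i))
    ((hab i₀).le.trans (hb (hi₀ i₁))) (by linarith)
  refine ⟨f₂ * f₁, mul_mem hf₂ hf₁, fun i => ?_⟩
  obtain ⟨s, hs, hf₂s⟩ := hmove i
  exact ⟨s, Ioo_subset_Icc_self hs, by rw [Equiv.Perm.mul_apply, hf₁t, hf₂s]⟩
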